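/- Let Ω ⊆ ℝⁿ be open, let S ⊆ Ω, and let ν : S → ℝⁿ be a map with ‖ν(x)‖ = 1 for x ∈ S. Suppose every point y ∈ Ω can be written as y = x + t ν(x) for some x ∈ S and t ∈ ℝ such that the segment {x + s ν(x) : s between 0 and t} is contained in Ω. If N₁, N₂ : Ω → ℝⁿ are both continuously differentiable, satisfy ‖Nᵢ(y)‖ = 1 and ∂_j (Nᵢ)_k(y) = ∂_k (Nᵢ)_j(y) for all y ∈ Ω and all j, k, and Nᵢ(x) = ν(x) for all x ∈ S (i = 1, 2), then N₁(y) = N₂(y) for all y ∈ Ω; in fact Nᵢ(x + tν(x)) = ν(x). -/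

import Mathlib

/-- The `k`-th partial derivative of a scalar function on `ℝⁿ`. -/
noncomputable def pder {n : ℕ} (f : EuclideanSpace ℝ (Fin n) → ℝ) (k : Fin n)
    (x : EuclideanSpace ℝ (Fin n)) : ℝ :=
  fderiv ℝ f x (EuclideanSpace.single k 1)

/-!
A unit field `N` satisfies `⟪DN u, N⟫ = 0` (differentiate `‖N‖² = 1`). If the Jacobian is moreover
symmetric, then `‖DN N‖² = ⟪DN (DN N), N⟫ = 0`, so `DN N = 0`: the derivative of `N` along its
own direction vanishes. Along a normal segment `s ↦ x + s ν(x)` the difference `N - ν(x)` thus has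
derivative `-DN (N - ν(x))`, and Grönwall's inequality shows that `N` stays equal to `ν(x)`.
-/

open Set Topology RealInnerProductSpace

section InnerProductSpace

variable {E F : Type*} [NormedAddCommGroup E] [NormedSpace ℝ E]
  [NormedAddCommGroup F] [InnerProductSpace ℝ F]

theorem inner_fderiv_apply_self_eq_zero {N : E → F} {y : E} {c : ℝ}
    (hN : DifferentiableAt ℝ N y) (hnorm : ∀ᶠ z in 𝓝 y, ‖N z‖ = c) (u : E) :
    ⟪fderiv ℝ N y u, N y⟫ = 0 := by
  have hconst : (‖N ·‖ ^ 2) =ᶠ[𝓝 y] fun _ => c ^ 2 := hnorm.mono fun z hz => by simp only [hz]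
  have hderiv : 2 • (innerSL ℝ (N y)).comp (fderiv ℝ N y) = 0 := by
    rw [← hN.hasFDerivAt.norm_sq.fderiv, hconst.fderiv_eq, fderiv_const_apply]
  simpa [real_inner_comm] using congrArg (· u) hderiv

theorem LinearMap.IsSymmetric.apply_eq_zero_of_forall_inner_eq_zero {L : F →ₗ[ℝ] F}
    (hL : L.IsSymmetric) {v : F} (h : ∀ u, ⟪L u, v⟫ = 0) : L v = 0 := by
  rw [← inner_self_eq_zero (𝕜 := ℝ), hL, real_inner_comm]
  exact h _

end InnerProductSpace

theorem EuclideanSpace.isSymmetric_of_apply_single_comm {ι : Type*} [Fintype ι] [DecidableEq ι]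
    (L : EuclideanSpace ℝ ι →ₗ[ℝ] EuclideanSpace ℝ ι)
    (h : ∀ j k, L (EuclideanSpace.single k 1) j = L (EuclideanSpace.single j 1) k) :
    L.IsSymmetric := by
  let b := (EuclideanSpace.basisFun ι ℝ).toBasis
  have hB : (innerₗ (EuclideanSpace ℝ ι)).compl₁₂ L LinearMap.id
      = (innerₗ (EuclideanSpace ℝ ι)).compl₁₂ LinearMap.id L :=
    LinearMap.ext_basis b b fun k j => by
      simp [b, EuclideanSpace.inner_single_left, EuclideanSpace.inner_single_right, h]
  exact fun u w => LinearMap.congr_fun₂ hB u w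

section NormedSpace

variable {E : Type*} [NormedAddCommGroup E] [NormedSpace ℝ E] {Ω : Set E} {N : E → E}

theorem apply_add_smul_self_eq_of_fderiv_apply_self_eq_zero_of_nonneg (hΩ : IsOpen Ω)
    (hN : ContDiffOn ℝ 1 N Ω) (hflow : ∀ y ∈ Ω, fderiv ℝ N y (N y) = 0) {x : E} {T : ℝ}
    (hT : 0 ≤ T) (hseg : ∀ s ∈ Icc 0 T, x + s • N x ∈ Ω) : N (x + T • N x) = N x := by
  set γ : ℝ → E := fun s => x + s • N x
  have hγ : Continuous γ := by fun_prop
  have hdiff : ∀ s ∈ Icc 0 T, DifferentiableAt ℝ N (γ s) := fun s hs =>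
    (hN.contDiffAt (hΩ.mem_nhds (hseg s hs))).differentiableAt one_ne_zero
  obtain ⟨K, hK⟩ := isCompact_Icc.exists_bound_of_continuousOn
    ((hN.continuousOn_fderiv_of_isOpen hΩ le_rfl).comp hγ.continuousOn fun s hs => hseg s hs)
  have hderiv : ∀ s ∈ Ico 0 T, HasDerivWithinAt (fun s => N (γ s) - N x)
      (fderiv ℝ N (γ s) (N x)) (Ici s) s := fun s hs =>
    (((hdiff s (Ico_subset_Icc_self hs)).hasFDerivAt.comp_hasDerivAt s
      (((hasDerivAt_id s).smul_const (N x)).const_add x)).sub_const (N x)).hasDerivWithinAt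
      |>.congr_deriv (by simp)
  have hbound : ∀ s ∈ Ico 0 T, ‖fderiv ℝ N (γ s) (N x)‖ ≤ K * ‖N (γ s) - N x‖ := by
    intro s hs
    have hself := hflow _ (hseg s (Ico_subset_Icc_self hs))
    calc ‖fderiv ℝ N (γ s) (N x)‖ = ‖fderiv ℝ N (γ s) (N (γ s) - N x)‖ := by
          rw [map_sub, hself, zero_sub, norm_neg]
      _ ≤ ‖fderiv ℝ N (γ s)‖ * ‖N (γ s) - N x‖ := (fderiv ℝ N (γ s)).le_opNorm _
      _ ≤ K * ‖N (γ s) - N x‖ := by gcongr; exact hK s (Ico_subset_Icc_self hs)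
  have hzero := eq_zero_of_abs_deriv_le_mul_abs_self_of_eq_zero_right
    ((hN.continuousOn.comp hγ.continuousOn fun s hs => hseg s hs).sub continuousOn_const)
    hderiv (by simp [γ]) hbound T ⟨hT, le_rfl⟩
  exact sub_eq_zero.mp hzero

theorem apply_add_smul_self_eq_of_fderiv_apply_self_eq_zero (hΩ : IsOpen Ω)
    (hN : ContDiffOn ℝ 1 N Ω) (hflow : ∀ y ∈ Ω, fderiv ℝ N y (N y) = 0) {x : E} {t : ℝ}
    (hseg : ∀ s ∈ uIcc 0 t, x + s • N x ∈ Ω) : N (x + t • N x) = N x := by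
  rcases le_total 0 t with ht | ht
  · rw [uIcc_of_le ht] at hseg
    exact apply_add_smul_self_eq_of_fderiv_apply_self_eq_zero_of_nonneg hΩ hN hflow ht hseg
  · -- `-N` satisfies the same hypotheses and runs along the segment backwards.
    have hflow' : ∀ y ∈ Ω, fderiv ℝ (-N) y ((-N) y) = 0 := fun y hy => by
      rw [fderiv_neg]
      simpa using hflow y hy
    have hseg' : ∀ s ∈ Icc 0 (-t), x + s • (-N) x ∈ Ω := fun s hs => by
      rw [Pi.neg_apply, smul_neg, ← neg_smul]
      exact hseg _ (by rw [uIcc_of_ge ht]; constructor <;> linarith [hs.1, hs.2])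
    simpa using apply_add_smul_self_eq_of_fderiv_apply_self_eq_zero_of_nonneg hΩ hN.neg hflow'
      (neg_nonneg.mpr ht) hseg'

end NormedSpace

section Euclidean

variable {n : ℕ} {Ω : Set (EuclideanSpace ℝ (Fin n))}
  {N : EuclideanSpace ℝ (Fin n) → EuclideanSpace ℝ (Fin n)}

theorem pder_apply_eq_fderiv_apply {y : EuclideanSpace ℝ (Fin n)} (hN : DifferentiableAt ℝ N y)
    (j k : Fin n) :
    pder (fun z => N z j) k y = fderiv ℝ N y (EuclideanSpace.single k 1) j := by
  have hj := ((PiLp.proj 2 (fun _ : Fin n => ℝ) j).hasFDerivAt.comp y hN.hasFDerivAt).fderiv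
  exact congrArg (· (EuclideanSpace.single k 1)) hj

theorem fderiv_apply_self_eq_zero_of_pder_comm (hΩ : IsOpen Ω) (hN : ContDiffOn ℝ 1 N Ω)
    (hunit : ∀ y ∈ Ω, ‖N y‖ = 1)
    (hsym : ∀ y ∈ Ω, ∀ j k : Fin n, pder (fun z => N z j) k y = pder (fun z => N z k) j y)
    {y : EuclideanSpace ℝ (Fin n)} (hy : y ∈ Ω) : fderiv ℝ N y (N y) = 0 := by
  have hNy : DifferentiableAt ℝ N y :=
    (hN.contDiffAt (hΩ.mem_nhds hy)).differentiableAt one_ne_zero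
  have hL : (fderiv ℝ N y).toLinearMap.IsSymmetric :=
    EuclideanSpace.isSymmetric_of_apply_single_comm (fderiv ℝ N y).toLinearMap fun j k => by
      simpa only [pder_apply_eq_fderiv_apply hNy, ContinuousLinearMap.coe_coe] using hsym y hy j k
  exact hL.apply_eq_zero_of_forall_inner_eq_zero
    (inner_fderiv_apply_self_eq_zero hNy (Filter.eventually_of_mem (hΩ.mem_nhds hy) hunit))

theorem apply_add_smul_eq_of_pder_comm (hΩ : IsOpen Ω) (hN : ContDiffOn ℝ 1 N Ω)
    (hunit : ∀ y ∈ Ω, ‖N y‖ = 1)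
    (hsym : ∀ y ∈ Ω, ∀ j k : Fin n, pder (fun z => N z j) k y = pder (fun z => N z k) j y)
    {x v : EuclideanSpace ℝ (Fin n)} (hx : N x = v) {t : ℝ}
    (hseg : ∀ s ∈ uIcc 0 t, x + s • v ∈ Ω) : N (x + t • v) = v := by
  subst hx
  exact apply_add_smul_self_eq_of_fderiv_apply_self_eq_zero hΩ hN
    (fun y hy => fderiv_apply_self_eq_zero_of_pder_comm hΩ hN hunit hsym hy) hseg

end Euclidean

theorem proper_extension_unique_general {n : ℕ}
    (Ω S : Set (EuclideanSpace ℝ (Fin n))) (hΩ : IsOpen Ω)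
    (ν : EuclideanSpace ℝ (Fin n) → EuclideanSpace ℝ (Fin n))
    (hcover : ∀ y ∈ Ω, ∃ x ∈ S, ∃ t : ℝ, y = x + t • ν x ∧
      ∀ s ∈ Set.uIcc (0 : ℝ) t, x + s • ν x ∈ Ω)
    (N₁ N₂ : EuclideanSpace ℝ (Fin n) → EuclideanSpace ℝ (Fin n))
    (hN₁ : ContDiffOn ℝ 1 N₁ Ω) (hN₂ : ContDiffOn ℝ 1 N₂ Ω)
    (hunit₁ : ∀ y ∈ Ω, ‖N₁ y‖ = 1) (hunit₂ : ∀ y ∈ Ω, ‖N₂ y‖ = 1)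
    (hsym₁ : ∀ y ∈ Ω, ∀ j k : Fin n,
      pder (fun z => N₁ z j) k y = pder (fun z => N₁ z k) j y)
    (hsym₂ : ∀ y ∈ Ω, ∀ j k : Fin n,
      pder (fun z => N₂ z j) k y = pder (fun z => N₂ z k) j y)
    (hext₁ : ∀ x ∈ S, N₁ x = ν x) (hext₂ : ∀ x ∈ S, N₂ x = ν x) :
    (∀ y ∈ Ω, N₁ y = N₂ y) ∧
    (∀ x ∈ S, ∀ t : ℝ, (∀ s ∈ Set.uIcc (0 : ℝ) t, x + s • ν x ∈ Ω) →
      N₁ (x + t • ν x) = ν x ∧ N₂ (x + t • ν x) = ν x) := by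
  have along₁ : ∀ x ∈ S, ∀ t : ℝ, (∀ s ∈ Set.uIcc (0 : ℝ) t, x + s • ν x ∈ Ω) →
      N₁ (x + t • ν x) = ν x := fun x hx _ =>
    apply_add_smul_eq_of_pder_comm hΩ hN₁ hunit₁ hsym₁ (hext₁ x hx)
  have along₂ : ∀ x ∈ S, ∀ t : ℝ, (∀ s ∈ Set.uIcc (0 : ℝ) t, x + s • ν x ∈ Ω) →
      N₂ (x + t • ν x) = ν x := fun x hx _ =>
    apply_add_smul_eq_of_pder_comm hΩ hN₂ hunit₂ hsym₂ (hext₂ x hx)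
  refine ⟨fun y hy => ?_, fun x hx t hseg => ⟨along₁ x hx t hseg, along₂ x hx t hseg⟩⟩
  obtain ⟨x, hx, t, rfl, hseg⟩ := hcover y hy
  rw [along₁ x hx t hseg, along₂ x hx t hseg]

/-- Uniqueness of a proper extension: if the open set `Ω` is covered by the normal
segments emanating from `S`, then any two proper extensions `N₁, N₂` of a unit field `ν`
given on `S` coincide on `Ω`; in fact `Nᵢ(x + tν(x)) = ν(x)`. -/
theorem proper_extension_unique {n : ℕ}
    (Ω S : Set (EuclideanSpace ℝ (Fin n))) (hΩ : IsOpen Ω) (hSΩ : S ⊆ Ω)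
    (ν : EuclideanSpace ℝ (Fin n) → EuclideanSpace ℝ (Fin n))
    (hν : ∀ x ∈ S, ‖ν x‖ = 1)
    (hcover : ∀ y ∈ Ω, ∃ x ∈ S, ∃ t : ℝ, y = x + t • ν x ∧
      ∀ s ∈ Set.uIcc (0 : ℝ) t, x + s • ν x ∈ Ω)
    (N₁ N₂ : EuclideanSpace ℝ (Fin n) → EuclideanSpace ℝ (Fin n))
    (hN₁ : ContDiffOn ℝ 1 N₁ Ω) (hN₂ : ContDiffOn ℝ 1 N₂ Ω)
    (hunit₁ : ∀ y ∈ Ω, ‖N₁ y‖ = 1) (hunit₂ : ∀ y ∈ Ω, ‖N₂ y‖ = 1)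
    (hsym₁ : ∀ y ∈ Ω, ∀ j k : Fin n,
      pder (fun z => N₁ z j) k y = pder (fun z => N₁ z k) j y)
    (hsym₂ : ∀ y ∈ Ω, ∀ j k : Fin n,
      pder (fun z => N₂ z j) k y = pder (fun z => N₂ z k) j y)
    (hext₁ : ∀ x ∈ S, N₁ x = ν x) (hext₂ : ∀ x ∈ S, N₂ x = ν x) :
    (∀ y ∈ Ω, N₁ y = N₂ y) ∧
    (∀ x ∈ S, ∀ t : ℝ, (∀ s ∈ Set.uIcc (0 : ℝ) t, x + s • ν x ∈ Ω) →
      N₁ (x + t • ν x) = ν x ∧ N₂ (x + t • ν x) = ν x) :=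
  proper_extension_unique_general Ω S hΩ ν hcover N₁ N₂ hN₁ hN₂ hunit₁ hunit₂ hsym₁ hsym₂ hext₁
    hext₂
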